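/- With the same notation: for each i, the period of the closed class C_i of the Boolean matrix 𝕄 equals the period of the corresponding recurrent class R_i = { ab : a ∈ C_i, ab ∈ 𝒜 } of ℙ. -/

import Mathlib

set_option linter.unusedSectionVars false


open scoped Classical

/-- The set of suffix lengths `i` at which the transition kernel `p` already decides
(positivity vs. nullity) the transition to `a` from any context ending in the last `i`
letters of `x`. -/
def tauSet {A : Type*} (m : ℕ) (p : List A → A → ℝ) (x : List A) (a : A) : Set ℕ :=
  {i : ℕ | (∀ y : List A, y.length = m - i → p (y ++ x.drop (m - i)) a = 0) ∨
    (∀ y : List A, y.length = m - i → 0 < p (y ++ x.drop (m - i)) a)}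

noncomputable def tau {A : Type*} (m : ℕ) (p : List A → A → ℝ) (x : List A) (a : A) : ℕ :=
  sInf (tauSet m p x a)

noncomputable def tauX {A : Type*} (m : ℕ) (p : List A → A → ℝ) (x : List A) : ℕ :=
  sSup {n : ℕ | ∃ a : A, n = tau m p x a}

/-- The order of the skeleton: `K = sup_x sup_a τ(x,a)`. -/
noncomputable def skOrder {A : Type*} (m : ℕ) (p : List A → A → ℝ) : ℕ :=
  sSup {n : ℕ | ∃ (x : List A) (a : A), x.length = m ∧ n = tau m p x a}

/-- The skeleton of the kernel `p`. -/
noncomputable def skeleton {A : Type*} (m : ℕ) (p : List A → A → ℝ) : Set (List A) :=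
  {w | ∃ x : List A, x.length = m ∧ w = x.drop (m - tauX m p x)}

/-- The induced first-order transition matrix on `A^m`. -/
noncomputable def PP {A : Type*} (m : ℕ) (p : List A → A → ℝ) :
    Matrix (List.Vector A m) (List.Vector A m) ℝ := fun x z =>
  if h : ∃ a : A, z.toList = x.toList.drop 1 ++ [a] then p x.toList h.choose else 0

/-- The skeleton-matrix entry, as a proposition (`Mprop m K p u v ↔ 𝕄(u,v) = 1`):
`v` is the shift of `u` by a letter `a`, and every length-`m` context ending in `u`
assigns positive probability to `a`. -/
def Mprop {A : Type*} (m K : ℕ) (p : List A → A → ℝ) (u v : List A) : Prop :=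
  u.length = K ∧ ∃ a : A, v = u.drop 1 ++ [a] ∧
    ∀ y : List A, y.length = m - K → 0 < p (y ++ u) a

/-- The skeleton matrix as a relation on `A^K`. -/
def Mrel {A : Type*} (m K : ℕ) (p : List A → A → ℝ)
    (u v : List.Vector A K) : Prop :=
  Mprop m K p u.toList v.toList

/-- The set `𝒜` of `𝕄`-admissible words of length `m` (as lists). -/
def admissible {A : Type*} (m K : ℕ) (p : List A → A → ℝ) (w : List A) : Prop :=
  ∀ i : ℕ, i + K < m → Mprop m K p ((w.drop i).take K) ((w.drop (i + 1)).take K)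

/-- Boolean powers of a binary matrix (relation): `relPow R n i j ↔ R^n(i,j) = 1`. -/
def relPow {E : Type*} (R : E → E → Prop) : ℕ → E → E → Prop
  | 0, i, j => i = j
  | n + 1, i, j => ∃ k, relPow R n i k ∧ R k j

def relLeads {E : Type*} (R : E → E → Prop) (i j : E) : Prop :=
  ∃ n : ℕ, 1 ≤ n ∧ relPow R n i j

def relComm {E : Type*} (R : E → E → Prop) (i j : E) : Prop :=
  i = j ∨ (relLeads R i j ∧ relLeads R j i)

/-- `C` is a communicating class of the binary matrix `R`. -/
def relIsClass {E : Type*} (R : E → E → Prop) (C : Set E) : Prop :=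
  ∃ i : E, C = {j | relComm R i j}

/-- `C` is a closed set for the binary matrix `R`. -/
def relClosed {E : Type*} (R : E → E → Prop) (C : Set E) : Prop :=
  ∀ i ∈ C, ∀ j, relLeads R i j → j ∈ C

/-- `C` is a closed communicating class of the binary matrix `R`. -/
def relClosedClass {E : Type*} (R : E → E → Prop) (C : Set E) : Prop :=
  relIsClass R C ∧ relClosed R C

/-- Period of a state for a binary matrix: the gcd (= greatest common divisor) of the
return times. -/
noncomputable def relPeriod {E : Type*} (R : E → E → Prop) (i : E) : ℕ :=
  sSup {d : ℕ | ∀ n : ℕ, 1 ≤ n → relPow R n i i → d ∣ n}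

section MatrixDefs
variable {S : Type*} [Fintype S] [DecidableEq S]

/-- `i` leads to `j` for a (sub)stochastic matrix `P`. -/
def mleads (P : Matrix S S ℝ) (i j : S) : Prop := ∃ n : ℕ, 1 ≤ n ∧ 0 < (P ^ n) i j

def mcomm (P : Matrix S S ℝ) (i j : S) : Prop :=
  i = j ∨ (mleads P i j ∧ mleads P j i)

def mIsClass (P : Matrix S S ℝ) (C : Set S) : Prop := ∃ i : S, C = {j | mcomm P i j}

def mClosed (P : Matrix S S ℝ) (C : Set S) : Prop :=
  ∀ i ∈ C, ∀ j, mleads P i j → j ∈ C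

/-- `C` is a recurrent (= closed communicating) class of `P`. -/
def mClosedClass (P : Matrix S S ℝ) (C : Set S) : Prop := mIsClass P C ∧ mClosed P C

/-- A state is recurrent iff its communicating class is closed. -/
def mRecurrent (P : Matrix S S ℝ) (i : S) : Prop := mClosed P {j | mcomm P i j}

/-- Period of a state: the gcd of its return times. -/
noncomputable def mPeriod (P : Matrix S S ℝ) (i : S) : ℕ :=
  sSup {d : ℕ | ∀ n : ℕ, 1 ≤ n → 0 < (P ^ n) i i → d ∣ n}

/-- Row-stochasticity. -/
def isStochastic (P : Matrix S S ℝ) : Prop :=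
  (∀ i j, 0 ≤ P i j) ∧ ∀ i, ∑ j : S, P i j = 1

end MatrixDefs

/-- Row-stochasticity of an `m`-th order kernel given as a function on lists. -/
def isKernel {A : Type*} [Fintype A] (m : ℕ) (p : List A → A → ℝ) : Prop :=
  ∀ x : List A, x.length = m → (∀ a : A, 0 ≤ p x a) ∧ ∑ a : A, p x a = 1

/-- The candidate recurrent class `R = {ab : a ∈ C, ab ∈ 𝒜}` associated with a
closed class `C` of the skeleton matrix. -/
def Rclass {A : Type*} (m K : ℕ) (p : List A → A → ℝ)
    (C : Set (List.Vector A K)) : Set (List.Vector A m) :=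
  {w | (∃ c ∈ C, List.Vector.toList c = w.toList.take K) ∧ admissible m K p w.toList}

section RelAux

variable {E : Type*} {R : E → E → Prop}

lemma relPow_trans {a b : ℕ} {x y z : E} (h1 : relPow R a x y) (h2 : relPow R b y z) :
    relPow R (a + b) x z := by
  induction b generalizing z with
  | zero => cases h2; exact h1
  | succ b ih =>
    obtain ⟨k, hk, hkz⟩ := h2
    exact ⟨k, ih hk, hkz⟩

lemma relLeads_trans {x y z : E} (h1 : relLeads R x y) (h2 : relLeads R y z) :
    relLeads R x z := by
  obtain ⟨n, hn, hp1⟩ := h1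
  obtain ⟨l, hl, hp2⟩ := h2
  exact ⟨n + l, by omega, relPow_trans hp1 hp2⟩

lemma relComm_symm {x y : E} (h : relComm R x y) : relComm R y x := by
  rcases h with rfl | ⟨h1, h2⟩
  · exact Or.inl rfl
  · exact Or.inr ⟨h2, h1⟩

lemma relComm_trans {x y z : E} (h1 : relComm R x y) (h2 : relComm R y z) :
    relComm R x z := by
  rcases h1 with rfl | ⟨a1, a2⟩
  · exact h2
  rcases h2 with rfl | ⟨b1, b2⟩
  · exact Or.inr ⟨a1, a2⟩
  · exact Or.inr ⟨relLeads_trans a1 b1, relLeads_trans b2 a2⟩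

lemma relComm_paths {x y : E} (h : relComm R x y) :
    ∃ α β : ℕ, relPow R α x y ∧ relPow R β y x := by
  rcases h with rfl | ⟨⟨a, _, ha⟩, ⟨b, _, hb⟩⟩
  · exact ⟨0, 0, rfl, rfl⟩
  · exact ⟨a, b, ha, hb⟩

end RelAux

lemma concat_last_eq {α : Type*} {l₁ l₂ : List α} {a b : α}
    (h : l₁ ++ [a] = l₂ ++ [b]) : a = b := by
  have h2 := congrArg List.getLast? h
  rw [List.getLast?_concat, List.getLast?_concat] at h2
  exact Option.some_injective _ h2

section PPAux

variable {A : Type*} [Fintype A] [DecidableEq A] {m K : ℕ} {p : List A → A → ℝ}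

lemma PP_nonneg (hp : isKernel m p) (x z : List.Vector A m) : 0 ≤ PP m p x z := by
  unfold PP
  split
  · exact (hp x.toList x.toList_length).1 _
  · exact le_refl 0

lemma PP_pow_nonneg (hp : isKernel m p) (n : ℕ) (x z : List.Vector A m) :
    0 ≤ ((PP m p) ^ n) x z := by
  induction n generalizing x z with
  | zero =>
    rw [pow_zero, Matrix.one_apply]
    split <;> norm_num
  | succ n ih =>
    rw [pow_succ, Matrix.mul_apply]
    exact Finset.sum_nonneg fun k _ => mul_nonneg (ih x k) (PP_nonneg hp k z)

lemma PP_pow_succ_pos (hp : isKernel m p) {t : ℕ} {x y z : List.Vector A m}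
    (h1 : 0 < ((PP m p) ^ t) x y) (h2 : 0 < PP m p y z) :
    0 < ((PP m p) ^ (t + 1)) x z := by
  rw [pow_succ, Matrix.mul_apply]
  exact Finset.sum_pos'
    (fun k _ => mul_nonneg (PP_pow_nonneg hp t x k) (PP_nonneg hp k z))
    ⟨y, Finset.mem_univ y, mul_pos h1 h2⟩

lemma PP_pow_add_pos (hp : isKernel m p) {s t : ℕ} {x y z : List.Vector A m}
    (h1 : 0 < ((PP m p) ^ s) x y) (h2 : 0 < ((PP m p) ^ t) y z) :
    0 < ((PP m p) ^ (s + t)) x z := by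
  rw [pow_add, Matrix.mul_apply]
  exact Finset.sum_pos'
    (fun k _ => mul_nonneg (PP_pow_nonneg hp s x k) (PP_pow_nonneg hp t k z))
    ⟨y, Finset.mem_univ y, mul_pos h1 h2⟩

lemma PP_pow_succ_elim (hp : isKernel m p) {t : ℕ} {x z : List.Vector A m}
    (h : 0 < ((PP m p) ^ (t + 1)) x z) :
    ∃ y, 0 < ((PP m p) ^ t) x y ∧ 0 < PP m p y z := by
  rw [pow_succ, Matrix.mul_apply] at h
  by_contra hc
  push_neg at hc
  refine absurd h (not_lt.mpr (Finset.sum_nonpos fun k _ => ?_))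
  have ha := PP_pow_nonneg hp t x k
  have hb := PP_nonneg hp k z
  rcases ha.lt_or_eq with ha' | ha'
  · rcases hb.lt_or_eq with hb' | hb'
    · exact absurd hb' (not_lt.mpr (hc k ha'))
    · rw [← hb', mul_zero]
  · rw [← ha', zero_mul]

lemma PP_pos_of {x z : List.Vector A m} {a : A}
    (hz : z.toList = x.toList.drop 1 ++ [a]) (hpos : 0 < p x.toList a) :
    0 < PP m p x z := by
  have hex : ∃ b, z.toList = x.toList.drop 1 ++ [b] := ⟨a, hz⟩
  unfold PP
  rw [dif_pos hex]
  have hsp := hex.choose_spec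
  have hab : a = hex.choose := concat_last_eq (hz.symm.trans hsp)
  rwa [hab] at hpos

lemma PP_pos_elim {x z : List.Vector A m} (h : 0 < PP m p x z) :
    ∃ a, z.toList = x.toList.drop 1 ++ [a] ∧ 0 < p x.toList a := by
  unfold PP at h
  by_cases hex : ∃ a, z.toList = x.toList.drop 1 ++ [a]
  · rw [dif_pos hex] at h
    exact ⟨hex.choose, hex.choose_spec, h⟩
  · rw [dif_neg hex] at h
    exact absurd h (lt_irrefl 0)

end PPAux

/-- The last `K` letters of a length-`m` word, as a vector. -/
def lastVec {A : Type*} (m K : ℕ) (hKm : K ≤ m) (x : List.Vector A m) :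
    List.Vector A K :=
  ⟨x.toList.drop (m - K), by rw [List.length_drop, x.toList_length]; omega⟩

section MainAux

variable {A : Type*} [Fintype A] [DecidableEq A] {m K : ℕ} {p : List A → A → ℝ}

lemma lastVec_toList (hKm : K ≤ m) (x : List.Vector A m) :
    (lastVec m K hKm x).toList = x.toList.drop (m - K) := rfl

lemma lastVec_shift (hKm : K ≤ m) (hK1 : 1 ≤ K) {x z : List.Vector A m} {a : A}
    (hz : z.toList = x.toList.drop 1 ++ [a]) :
    (lastVec m K hKm z).toList = (lastVec m K hKm x).toList.drop 1 ++ [a] := by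
  rw [lastVec_toList, lastVec_toList, hz,
    List.drop_append_of_le_length (by rw [List.length_drop, x.toList_length]; omega),
    List.drop_drop, List.drop_drop]
  congr 2
  omega

lemma step_proj (hm : 1 ≤ m) (hKm : K ≤ m) (hK1 : 1 ≤ K)
    (hK : ∀ (x x' : List A) (a : A), x.length = m → x'.length = m →
      x.drop (m - K) = x'.drop (m - K) → (0 < p x a ↔ 0 < p x' a))
    {x z : List.Vector A m} (h : 0 < PP m p x z) :
    Mrel m K p (lastVec m K hKm x) (lastVec m K hKm z) := by
  obtain ⟨a, hz, hpos⟩ := PP_pos_elim h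
  refine ⟨(lastVec m K hKm x).toList_length, a, lastVec_shift hKm hK1 hz, ?_⟩
  intro y hy
  have hx' : (y ++ (lastVec m K hKm x).toList).length = m := by
    rw [List.length_append, hy, (lastVec m K hKm x).toList_length]; omega
  have hdrop : (y ++ (lastVec m K hKm x).toList).drop (m - K) =
      x.toList.drop (m - K) := by
    have h2 : (y ++ (lastVec m K hKm x).toList).drop (m - K) =
        (lastVec m K hKm x).toList := by
      rw [← hy]; exact List.drop_left
    rw [h2]; rfl
  exact (hK _ x.toList a hx' x.toList_length hdrop).mpr hpos

lemma proj_pow (hm : 1 ≤ m) (hKm : K ≤ m) (hK1 : 1 ≤ K) (hp : isKernel m p)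
    (hK : ∀ (x x' : List A) (a : A), x.length = m → x'.length = m →
      x.drop (m - K) = x'.drop (m - K) → (0 < p x a ↔ 0 < p x' a)) :
    ∀ (n : ℕ) (x z : List.Vector A m), 0 < ((PP m p) ^ n) x z →
      relPow (Mrel m K p) n (lastVec m K hKm x) (lastVec m K hKm z) := by
  intro n
  induction n with
  | zero =>
    intro x z h
    have hxz : x = z := by
      by_contra hne
      rw [pow_zero, Matrix.one_apply_ne hne] at h
      exact lt_irrefl 0 h
    subst hxz
    exact rfl
  | succ n ih =>
    intro x z h
    obtain ⟨y, h1, h2⟩ := PP_pow_succ_elim hp h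
    exact ⟨lastVec m K hKm y, ih x y h1, step_proj hm hKm hK1 hK h2⟩

lemma lift_pow (hm : 1 ≤ m) (hKm : K ≤ m) (hK1 : 1 ≤ K) (hp : isKernel m p) :
    ∀ (t : ℕ) (x : List.Vector A m) (u' : List.Vector A K),
      relPow (Mrel m K p) t (lastVec m K hKm x) u' →
      ∃ z, 0 < ((PP m p) ^ t) x z ∧ lastVec m K hKm z = u' := by
  intro t
  induction t with
  | zero =>
    intro x u' h
    exact ⟨x, by rw [pow_zero, Matrix.one_apply_eq]; norm_num, h⟩
  | succ t ih =>
    intro x u' h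
    obtain ⟨k, hk, hrel⟩ := h
    obtain ⟨z, hz, hlast⟩ := ih x k hk
    obtain ⟨hlen, a, hshift, hpos⟩ := hrel
    have hzlen : (z.toList.drop 1 ++ [a]).length = m := by
      rw [List.length_append, List.length_drop, z.toList_length, List.length_singleton]
      omega
    refine ⟨⟨z.toList.drop 1 ++ [a], hzlen⟩, ?_, ?_⟩
    · refine PP_pow_succ_pos hp hz (PP_pos_of rfl ?_)
      have hdec : z.toList = z.toList.take (m - K) ++ k.toList := by
        conv_lhs => rw [← List.take_append_drop (m - K) z.toList]
        rw [← hlast]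
        rfl
      rw [hdec]
      exact hpos _ (by rw [List.length_take, z.toList_length]; omega)
    · apply Subtype.ext
      show (lastVec m K hKm ⟨z.toList.drop 1 ++ [a], hzlen⟩).toList = u'.toList
      rw [lastVec_shift (z := ⟨z.toList.drop 1 ++ [a], hzlen⟩) hKm hK1 rfl, hlast]
      exact hshift.symm

lemma spell (hm : 1 ≤ m) (hKm : K ≤ m) (hK1 : 1 ≤ K) (hp : isKernel m p)
    (x w : List.Vector A m) (hadm : admissible m K p w.toList)
    (hc : x.toList.drop (m - K) = w.toList.take K) :
    0 < ((PP m p) ^ (m - K)) x w := by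
  set L := x.toList ++ w.toList.drop K with hL
  have hLlen : L.length = 2 * m - K := by
    rw [hL, List.length_append, List.length_drop, x.toList_length, w.toList_length]
    omega
  have hLdrop : L.drop (m - K) = w.toList := by
    rw [hL, List.drop_append_of_le_length (by rw [x.toList_length]; omega), hc,
      List.take_append_drop]
  -- the sliding window identity
  have hs : ∀ j, ((L.drop j).take m).drop (m - K) = (w.toList.drop j).take K := by
    intro j
    rw [List.drop_take, List.drop_drop, show m - (m - K) = K by omega,
      show j + (m - K) = (m - K) + j by omega, ← List.drop_drop, hLdrop]
  have key : ∀ j, j ≤ m - K →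
      ∃ z : List.Vector A m, z.toList = (L.drop j).take m ∧ 0 < ((PP m p) ^ j) x z := by
    intro j
    induction j with
    | zero =>
      intro _
      refine ⟨x, ?_, by rw [pow_zero, Matrix.one_apply_eq]; norm_num⟩
      rw [List.drop_zero, hL]
      exact (List.take_left' x.toList_length).symm
    | succ j ih =>
      intro hj
      obtain ⟨z, hzl, hzp⟩ := ih (by omega)
      -- the admissibility step
      obtain ⟨_, a, hshift, hpos⟩ := hadm j (by omega)
      -- length of L.drop (j+1)
      have hlen1 : (L.drop (j + 1)).length = 2 * m - K - (j + 1) := by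
        rw [List.length_drop, hLlen]
      have hmlt : m - 1 < (L.drop (j + 1)).length := by omega
      -- take_succ decomposition of the next slice
      set b := (L.drop (j + 1))[m - 1]'hmlt with hb
      have htks : (L.drop (j + 1)).take m = (L.drop (j + 1)).take (m - 1) ++ [b] := by
        conv_lhs => rw [show m = (m - 1) + 1 by omega]
        rw [List.take_succ, List.getElem?_eq_getElem hmlt]
        rfl
      -- identify a = b via last elements of the (j+1)-window
      have hw1 : ((L.drop (j + 1)).take m).drop (m - K) = (w.toList.drop (j + 1)).take K :=
        hs (j + 1)
      have hw2 : ((L.drop (j + 1)).take (m - 1)).drop (m - K) ++ [b] =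
          ((w.toList.drop j).take K).drop 1 ++ [a] := by
        rw [← List.drop_append_of_le_length
          (by rw [List.length_take]; omega : m - K ≤ ((L.drop (j + 1)).take (m - 1)).length),
          ← htks, hw1, hshift]
      have hab : b = a := concat_last_eq hw2
      -- the next state
      have hz'len : (z.toList.drop 1 ++ [a]).length = m := by
        rw [List.length_append, List.length_drop, z.toList_length, List.length_singleton]
        omega
      refine ⟨⟨z.toList.drop 1 ++ [a], hz'len⟩, ?_, ?_⟩
      · show z.toList.drop 1 ++ [a] = (L.drop (j + 1)).take m
        rw [htks, ← hab, hzl, List.drop_take, List.drop_drop]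
      · refine PP_pow_succ_pos hp hzp (PP_pos_of rfl ?_)
        have hdec : z.toList = z.toList.take (m - K) ++ (w.toList.drop j).take K := by
          conv_lhs => rw [← List.take_append_drop (m - K) z.toList]
          rw [show z.toList.drop (m - K) = (w.toList.drop j).take K by rw [hzl]; exact hs j]
        rw [hdec]
        exact hpos _ (by rw [List.length_take, z.toList_length]; omega)
  obtain ⟨z, hzl, hzp⟩ := key (m - K) le_rfl
  have hzw : z = w := by
    apply Subtype.ext
    show z.toList = w.toList
    rw [hzl, hLdrop]
    exact List.take_of_length_le (le_of_eq w.toList_length)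
  rwa [hzw] at hzp

end MainAux

theorem stmt_10 {A : Type*} [Fintype A] [DecidableEq A] (m K : ℕ) (hm : 1 ≤ m)
    (hKm : K ≤ m)
    (p : List A → A → ℝ) (hp : isKernel m p)
    (hK : ∀ (x x' : List A) (a : A), x.length = m → x'.length = m →
      x.drop (m - K) = x'.drop (m - K) → (0 < p x a ↔ 0 < p x' a))
    (C : Set (List.Vector A K)) (hC : relClosedClass (Mrel m K p) C) :
    ∀ u ∈ C, ∀ w ∈ Rclass m K p C, relPeriod (Mrel m K p) u = mPeriod (PP m p) w := by
  intro u hu w hw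
  obtain ⟨⟨c, hcC, hcw⟩, hadm⟩ := hw
  have hK1 : 1 ≤ K := by
    by_contra hcon
    have hK0 : K = 0 := by omega
    subst hK0
    obtain ⟨_, a, ha, _⟩ := hadm 0 (by omega)
    simp at ha
  set v : List.Vector A K := lastVec m K hKm w with hv
  have hwin : ∀ j, j + K ≤ m → ∃ vj : List.Vector A K,
      vj.toList = (w.toList.drop j).take K ∧ relPow (Mrel m K p) j c vj := by
    intro j
    induction j with
    | zero =>
      intro _
      exact ⟨c, by rw [hcw, List.drop_zero], rfl⟩
    | succ j ih =>
      intro hj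
      obtain ⟨vj, hvjl, hvjp⟩ := ih (by omega)
      have hlen : ((w.toList.drop (j + 1)).take K).length = K := by
        rw [List.length_take, List.length_drop, w.toList_length]; omega
      refine ⟨⟨(w.toList.drop (j + 1)).take K, hlen⟩, rfl, vj, hvjp, ?_⟩
      show Mprop m K p vj.toList ((w.toList.drop (j + 1)).take K)
      rw [hvjl]
      exact hadm j (by omega)
  obtain ⟨vmk, hvmkl, hvmkp⟩ := hwin (m - K) (by omega)
  have hvmk : vmk = v := by
    apply Subtype.ext
    show vmk.toList = w.toList.drop (m - K)
    rw [hvmkl]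
    exact List.take_of_length_le (le_of_eq (by rw [List.length_drop, w.toList_length]; omega))
  have hvC : v ∈ C := by
    rcases Nat.eq_zero_or_pos (m - K) with h0 | hpos
    · rw [h0] at hvmkp
      have hcv : c = vmk := hvmkp
      rw [← hvmk, ← hcv]
      exact hcC
    · exact hvmk ▸ (hC.2 c hcC vmk ⟨m - K, hpos, hvmkp⟩)
  obtain ⟨⟨i, hCi⟩, hclosed⟩ := hC
  have hcomm : ∀ {x y : List.Vector A K}, x ∈ C → y ∈ C → relComm (Mrel m K p) x y := by
    intro x y hx hy
    rw [hCi] at hx hy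
    exact relComm_trans (relComm_symm hx) hy
  obtain ⟨α, β, hα, hβ⟩ := relComm_paths (hcomm hu hvC)
  obtain ⟨γ, _, hγ, _⟩ := relComm_paths (hcomm hu hcC)
  have hlift : ∀ t, relPow (Mrel m K p) t v c → 0 < ((PP m p) ^ (t + (m - K))) w w := by
    intro t ht
    obtain ⟨z, hz, hzlast⟩ := lift_pow hm hKm hK1 hp t w c ht
    have hzc : z.toList.drop (m - K) = w.toList.take K := by
      have h4 : (lastVec m K hKm z).toList = c.toList := congrArg _ hzlast
      rw [lastVec_toList] at h4
      rw [h4, hcw]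
    exact PP_pow_add_pos hp hz (spell hm hKm hK1 hp z w hadm hzc)
  unfold relPeriod mPeriod
  congr 1
  ext d
  simp only [Set.mem_setOf_eq]
  constructor
  · intro hd n hn hret
    have hvv : relPow (Mrel m K p) n v v := proj_pow hm hKm hK1 hp hK n w w hret
    have h2 : relPow (Mrel m K p) (α + (n + β)) u u :=
      relPow_trans hα (relPow_trans hvv hβ)
    have hd2 := hd _ (by omega) h2
    have hd1 : d ∣ α + β := by
      rcases Nat.eq_zero_or_pos (α + β) with h0 | hpos
      · rw [h0]; exact dvd_zero d
      · exact hd _ hpos (relPow_trans hα hβ)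
    rw [show α + (n + β) = (α + β) + n by omega] at hd2
    exact (Nat.dvd_add_right hd1).mp hd2
  · intro hd n hn hret
    have q1 : relPow (Mrel m K p) (β + γ) v c := relPow_trans hβ hγ
    have q2 : relPow (Mrel m K p) (β + (n + γ)) v c :=
      relPow_trans hβ (relPow_trans hret hγ)
    have r2 := hd _ (by omega) (hlift _ q2)
    have r1 : d ∣ β + γ + (m - K) := by
      rcases Nat.eq_zero_or_pos (β + γ + (m - K)) with h0 | hpos
      · rw [h0]; exact dvd_zero d
      · exact hd _ hpos (hlift _ q1)
    rw [show β + (n + γ) + (m - K) = (β + γ + (m - K)) + n by omega] at r2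
    exact (Nat.dvd_add_right r1).mp r2
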